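/- arXiv:1002.1456 — 2 statements merged into one kernel-verified Lean document; each statement's English description precedes it below -/
import Mathlib

section
/- In a finite weighted game arena with maximal weight M and state set S, every winning strategy λ1 of Player 1 that minimizes Player 1's regret is bounded by 2·M·|S|: for every strategy λ2 of Player 2, u_1(λ1, λ2) ≤ 2·M·|S|. -/
open scoped ENat

/-- A strategy maps a finite play (history, current position last) to the chosen
next position. -/
abbrev Strat (S : Type) := List S → S

/-- A two-player turn-based game arena: an ownership function (`true` = Player 1,
`false` = Player 2), an initial position and a transition relation. -/
structure Arena (S : Type) where
  owner : S → Bool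
  init : S
  edge : S → S → Prop

namespace Arena

variable {S : Type}

/-- A strategy is valid if it always follows edges of the arena. -/
def Valid (A : Arena S) (σ : Strat S) : Prop :=
  ∀ l : List S, A.edge (l.getLastD A.init) (σ l)

/-- Combine the strategy `σi` of player `i` with the strategy `σo` of her
opponent into a strategy profile. -/
def pairFor (i : Bool) (σi σo : Strat S) : Bool → Strat S :=
  fun b => if b = i then σi else σo

/-- The prefix of length `n` of the outcome of a strategy profile. -/
def outList (A : Arena S) (σ : Bool → Strat S) : ℕ → List S
  | 0 => [A.init]
  | n + 1 =>
      let l := outList A σ n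
      l ++ [σ (A.owner (l.getLastD A.init)) l]

/-- The position reached after `n` rounds. -/
def cur (A : Arena S) (σ : Bool → Strat S) (n : ℕ) : S :=
  (A.outList σ n).getLastD A.init

/-- The total weight of a finite play. -/
def pathWeight (w : S → S → ℕ) (l : List S) : ℕ :=
  ((l.zip l.tail).map fun p => w p.1 p.2).sum

/-- `n` is the round of the first visit of the outcome to the target set `C`. -/
def firstVisit (A : Arena S) (C : Set S) (σ : Bool → Strat S) (n : ℕ) : Prop :=
  A.cur σ n ∈ C ∧ ∀ m < n, A.cur σ m ∉ C

/-- The utility of a strategy profile w.r.t. edge weights `w` and target set `C`: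
the sum of the weights up to the first visit to `C`, and `⊤` if `C` is never
visited. -/
noncomputable def util (A : Arena S) (w : S → S → ℕ) (C : Set S)
    (σ : Bool → Strat S) : ℕ∞ :=
  ⨅ (n : ℕ) (_ : A.firstVisit C σ n), (pathWeight w (A.outList σ n) : ℕ∞)

/-- A strategy of player `i` is winning if all its outcomes against valid
opposing strategies visit the target set `C`. -/
def Winning (A : Arena S) (C : Set S) (i : Bool) (σi : Strat S) : Prop :=
  ∀ σo : Strat S, A.Valid σo → ∃ n, A.cur (pairFor i σi σo) n ∈ C

/-- Best response value of player `i` against opposing strategy `σo`. -/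
noncomputable def br (A : Arena S) (w : S → S → ℕ) (C : Set S)
    (i : Bool) (σo : Strat S) : ℕ∞ :=
  ⨅ (σi : Strat S) (_ : A.Valid σi), A.util w C (pairFor i σi σo)

end Arena

/-- Regret of utility `u` w.r.t. best-response value `b`, with the convention
`⊤ - ⊤ = ⊤`. -/
noncomputable def regPairVal (u b : ℕ∞) : ℕ∞ := if u = ⊤ then ⊤ else u - b

namespace Arena

variable {S : Type}

/-- The regret of strategy `σi` of player `i`. -/
noncomputable def regOf (A : Arena S) (w : S → S → ℕ) (C : Set S)
    (i : Bool) (σi : Strat S) : ℕ∞ :=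
  ⨆ (σo : Strat S) (_ : A.Valid σo),
    regPairVal (A.util w C (pairFor i σi σo)) (A.br w C i σo)

/-- The minimal regret of player `i`. -/
noncomputable def regMin (A : Arena S) (w : S → S → ℕ) (C : Set S) (i : Bool) : ℕ∞ :=
  ⨅ (σi : Strat S) (_ : A.Valid σi), A.regOf w C i σi

end Arena

namespace Arena

variable {S : Type}

lemma outList_length (A : Arena S) (σ : Bool → Strat S) (n : ℕ) :
    (A.outList σ n).length = n + 1 := by
  induction n with
  | zero => rfl
  | succ n ih => simp [outList, ih]

lemma cur_zero (A : Arena S) (σ : Bool → Strat S) : A.cur σ 0 = A.init := rfl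

lemma cur_succ (A : Arena S) (σ : Bool → Strat S) (n : ℕ) :
    A.cur σ (n + 1) = σ (A.owner (A.cur σ n)) (A.outList σ n) := by
  simp [cur, outList, List.getLastD_concat]

lemma getLastD_outList (A : Arena S) (σ : Bool → Strat S) (n : ℕ) :
    (A.outList σ n).getLastD A.init = A.cur σ n := rfl

lemma pathWeight_le {w : S → S → ℕ} {M : ℕ} (hM : ∀ s t, w s t ≤ M) (l : List S) :
    pathWeight w l ≤ M * (l.length - 1) := by
  have h1 : ∀ x ∈ (l.zip l.tail).map (fun p => w p.1 p.2), x ≤ M := by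
    intro x hx
    simp only [List.mem_map] at hx
    obtain ⟨⟨a, b⟩, _, rfl⟩ := hx
    exact hM a b
  have h2 := List.sum_le_card_nsmul _ M h1
  simpa [List.length_zip, List.length_tail, Nat.min_eq_right, Nat.sub_le,
    mul_comm, pathWeight] using h2

lemma pathWeight_outList_le (A : Arena S) {w : S → S → ℕ} {M : ℕ}
    (hM : ∀ s t, w s t ≤ M) (σ : Bool → Strat S) (n : ℕ) :
    pathWeight w (A.outList σ n) ≤ M * n := by
  have := pathWeight_le hM (A.outList σ n)
  rwa [outList_length, Nat.add_sub_cancel] at this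

/-- One attractor step. -/
def stepSet (A : Arena S) (X : Set S) : Set S :=
  {s | if A.owner s then ∃ t, A.edge s t ∧ t ∈ X else ∀ t, A.edge s t → t ∈ X}

/-- The attractor hierarchy for Player 1 towards target `C`. -/
def attr (A : Arena S) (C : Set S) : ℕ → Set S
  | 0 => C
  | k + 1 => attr A C k ∪ stepSet A (attr A C k)

lemma attr_succ (A : Arena S) (C : Set S) (k : ℕ) :
    attr A C (k + 1) = attr A C k ∪ stepSet A (attr A C k) := rfl

lemma attr_le_succ (A : Arena S) (C : Set S) (k : ℕ) :
    attr A C k ⊆ attr A C (k + 1) := Set.subset_union_left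

lemma attr_mono (A : Arena S) (C : Set S) {k m : ℕ} (h : k ≤ m) :
    attr A C k ⊆ attr A C m := by
  induction m with
  | zero => simp [Nat.le_zero.mp h]
  | succ m ih =>
      rcases Nat.lt_or_ge k (m + 1) with h' | h'
      · exact (ih (Nat.lt_succ_iff.mp h')).trans (attr_le_succ A C m)
      · have : k = m + 1 := le_antisymm h h'
        simp [this]

lemma attr_fix (A : Arena S) (C : Set S) {k : ℕ}
    (h : attr A C k = attr A C (k + 1)) :
    ∀ m, attr A C (k + m) = attr A C k := by
  intro m
  induction m with
  | zero => rfl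
  | succ m ih =>
      have : attr A C (k + m + 1) = attr A C (k + m) ∪ stepSet A (attr A C (k + m)) := rfl
      rw [show k + (m + 1) = k + m + 1 from rfl, this, ih, ← attr_succ, ← h]

/-- The rank of a state: the first level of the attractor containing it. -/
noncomputable def rk (A : Arena S) (C : Set S) (s : S) : ℕ :=
  sInf {k | s ∈ attr A C k}

lemma rk_le (A : Arena S) (C : Set S) {s : S} {k : ℕ} (h : s ∈ attr A C k) :
    rk A C s ≤ k := Nat.sInf_le h

lemma mem_attr_rk (A : Arena S) (C : Set S) {s : S} (h : ∃ k, s ∈ attr A C k) :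
    s ∈ attr A C (rk A C s) := Nat.sInf_mem h

/-- The key step property of ranks outside the target. -/
lemma attr_step (A : Arena S) (C : Set S) {s : S}
    (hs : s ∈ attr A C (rk A C s)) (hsC : s ∉ C) :
    1 ≤ rk A C s ∧
    (A.owner s = true → ∃ t, A.edge s t ∧ t ∈ attr A C (rk A C s - 1)) ∧
    (A.owner s = false → ∀ t, A.edge s t → t ∈ attr A C (rk A C s - 1)) := by
  have hr0 : rk A C s ≠ 0 := by
    intro h0
    rw [h0] at hs
    exact hsC hs
  have hr1 : 1 ≤ rk A C s := Nat.one_le_iff_ne_zero.mpr hr0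
  have hnot : s ∉ attr A C (rk A C s - 1) := by
    intro hmem
    have := rk_le A C hmem
    omega
  have hsplit : s ∈ attr A C (rk A C s - 1) ∪ stepSet A (attr A C (rk A C s - 1)) := by
    have : rk A C s - 1 + 1 = rk A C s := by omega
    rw [← attr_succ, this]
    exact hs
  have hstep : s ∈ stepSet A (attr A C (rk A C s - 1)) := hsplit.resolve_left hnot
  refine ⟨hr1, ?_, ?_⟩
  · intro how
    have := hstep
    simp only [stepSet, Set.mem_setOf_eq, how] at this
    simpa using this
  · intro how
    have := hstep
    simp only [stepSet, Set.mem_setOf_eq, how] at this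
    simpa using this

/-- If Player 1 has a winning strategy, the initial state belongs to any
fixpoint level of the attractor. -/
lemma init_mem_attr_of_fix (A : Arena S) (C : Set S) {σ1 : Strat S}
    (hval : A.Valid σ1) (hwin : A.Winning C true σ1) {k : ℕ}
    (hfix : attr A C k = attr A C (k + 1)) :
    A.init ∈ attr A C k := by
  classical
  by_contra hinit
  set D := attr A C k with hD
  have hC : C ⊆ D := attr_mono A C (Nat.zero_le k)
  have hP1 : ∀ s, s ∉ D → A.owner s = true → ∀ t, A.edge s t → t ∉ D := by
    intro s hsD how t het htD
    apply hsD
    have : s ∈ stepSet A D := by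
      simp only [stepSet, Set.mem_setOf_eq, how, if_true]
      exact ⟨t, het, htD⟩
    have : s ∈ attr A C (k + 1) := Set.mem_union_right _ this
    rwa [← hfix] at this
  have hP2 : ∀ s, s ∉ D → A.owner s = false → ∃ t, A.edge s t ∧ t ∉ D := by
    intro s hsD how
    by_contra hcon
    push_neg at hcon
    apply hsD
    have : s ∈ stepSet A D := by
      simp only [stepSet, Set.mem_setOf_eq, how, if_false]
      exact hcon
    have : s ∈ attr A C (k + 1) := Set.mem_union_right _ this
    rwa [← hfix] at this
  -- trap strategy of Player 2
  let σ2 : Strat S := fun l =>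
    if h : ∃ t, A.edge (l.getLastD A.init) t ∧ t ∉ D then h.choose else σ1 l
  have hv2 : A.Valid σ2 := by
    intro l
    show A.edge _ (if h : _ then _ else _)
    split
    · next h => exact h.choose_spec.1
    · exact hval l
  have hstay : ∀ n, A.cur (pairFor true σ1 σ2) n ∉ D := by
    intro n
    induction n with
    | zero => exact hinit
    | succ n ih =>
        rw [cur_succ]
        rcases how : A.owner (A.cur (pairFor true σ1 σ2) n) with _ | _
        · -- Player 2 node
          show σ2 (A.outList (pairFor true σ1 σ2) n) ∉ D
          have hex : ∃ t, A.edge ((A.outList (pairFor true σ1 σ2) n).getLastD A.init) t ∧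
              t ∉ D := hP2 _ ih how
          show (if h : ∃ t, A.edge ((A.outList (pairFor true σ1 σ2) n).getLastD A.init) t ∧ t ∉ D
              then h.choose else σ1 _) ∉ D
          rw [dif_pos hex]
          exact hex.choose_spec.2
        · -- Player 1 node
          show σ1 (A.outList (pairFor true σ1 σ2) n) ∉ D
          apply hP1 _ ih how
          exact hval (A.outList (pairFor true σ1 σ2) n)
  obtain ⟨n, hn⟩ := hwin σ2 hv2
  exact hstay n (hC hn)

lemma exists_fix_le_card (A : Arena S) [Fintype S] (C : Set S) :
    ∃ k ≤ Fintype.card S, attr A C k = attr A C (k + 1) := by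
  by_contra hcon
  push_neg at hcon
  have hstrict : ∀ k ≤ Fintype.card S, (attr A C k).ncard < (attr A C (k + 1)).ncard := by
    intro k hk
    refine Set.ncard_lt_ncard ?_ (Set.toFinite _)
    exact ssubset_of_subset_of_ne (attr_le_succ A C k) (hcon k hk)
  have hge : ∀ k ≤ Fintype.card S + 1, k ≤ (attr A C k).ncard := by
    intro k hk
    induction k with
    | zero => exact Nat.zero_le _
    | succ k ih =>
        have h1 := ih (by omega)
        have h2 := hstrict k (by omega)
        omega
  have h3 := hge (Fintype.card S + 1) le_rfl
  have h4 : (attr A C (Fintype.card S + 1)).ncard ≤ Fintype.card S := by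
    have := Set.ncard_le_ncard (Set.subset_univ (attr A C (Fintype.card S + 1)))
      Set.finite_univ
    rwa [Set.ncard_univ, Nat.card_eq_fintype_card] at this
  omega

/-- From a winning strategy, extract one reaching `C` within `card S` steps. -/
lemma exists_fast_winning (A : Arena S) [Fintype S] (C : Set S) {σ1 : Strat S}
    (hval : A.Valid σ1) (hwin : A.Winning C true σ1) :
    ∃ σ' : Strat S, A.Valid σ' ∧ ∀ σo : Strat S, A.Valid σo →
      ∃ n ≤ Fintype.card S, A.cur (pairFor true σ' σo) n ∈ C := by
  classical
  obtain ⟨k, hk, hfix⟩ := exists_fix_le_card A C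
  have hinit : A.init ∈ attr A C k := init_mem_attr_of_fix A C hval hwin hfix
  have hrk_init : rk A C A.init ≤ Fintype.card S := (rk_le A C hinit).trans hk
  let σ' : Strat S := fun l =>
    if h : ∃ t, A.edge (l.getLastD A.init) t ∧
        t ∈ attr A C (rk A C (l.getLastD A.init) - 1) then h.choose else σ1 l
  have hv' : A.Valid σ' := by
    intro l
    show A.edge _ (if h : _ then _ else _)
    split
    · next h => exact h.choose_spec.1
    · exact hval l
  refine ⟨σ', hv', ?_⟩
  intro σo ho
  set σ := pairFor true σ' σo with hσ
  have claim : ∀ n, (∃ m ≤ n, A.cur σ m ∈ C) ∨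
      (A.cur σ n ∈ attr A C (rk A C (A.cur σ n)) ∧
        rk A C (A.cur σ n) + n ≤ rk A C A.init) := by
    intro n
    induction n with
    | zero =>
        right
        rw [cur_zero]
        exact ⟨mem_attr_rk A C ⟨k, hinit⟩, by omega⟩
    | succ n ih =>
        rcases ih with ⟨m, hm, hmc⟩ | ⟨hmem, hle⟩
        · exact Or.inl ⟨m, by omega, hmc⟩
        · by_cases hsC : A.cur σ n ∈ C
          · exact Or.inl ⟨n, by omega, hsC⟩
          · right
            obtain ⟨hr1, hb, hc⟩ := attr_step A C hmem hsC
            have key : A.cur σ (n + 1) ∈ attr A C (rk A C (A.cur σ n) - 1) := by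
              rw [cur_succ]
              rcases how : A.owner (A.cur σ n) with _ | _
              · -- Player 2 node: opponent moves, all moves descend
                show σo (A.outList σ n) ∈ _
                exact hc how _ (ho (A.outList σ n))
              · -- Player 1 node: σ' descends
                show σ' (A.outList σ n) ∈ _
                have hex : ∃ t, A.edge ((A.outList σ n).getLastD A.init) t ∧
                    t ∈ attr A C (rk A C ((A.outList σ n).getLastD A.init) - 1) := by
                  rw [getLastD_outList]
                  exact hb how
                show (if h : _ then _ else σ1 _) ∈ _
                rw [dif_pos hex]
                exact hex.choose_spec.2
            have hrk' : rk A C (A.cur σ (n + 1)) ≤ rk A C (A.cur σ n) - 1 :=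
              rk_le A C key
            refine ⟨mem_attr_rk A C ⟨_, key⟩, by omega⟩
  rcases claim (rk A C A.init) with ⟨m, hm, hmc⟩ | ⟨hmem, hle⟩
  · exact ⟨m, hm.trans hrk_init, hmc⟩
  · have h0 : rk A C (A.cur σ (rk A C A.init)) = 0 := by omega
    rw [h0] at hmem
    exact ⟨rk A C A.init, hrk_init, hmem⟩

/-- A play visiting `C` within `N` steps yields utility at most `M·N`. -/
lemma util_le_of_fast (A : Arena S) {w : S → S → ℕ} {M : ℕ}
    (hM : ∀ s t, w s t ≤ M) (C : Set S) (σ : Bool → Strat S) {N : ℕ}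
    (h : ∃ n ≤ N, A.cur σ n ∈ C) :
    A.util w C σ ≤ ((M * N : ℕ) : ℕ∞) := by
  classical
  obtain ⟨n, hn, hc⟩ := h
  have hex : ∃ n, A.cur σ n ∈ C := ⟨n, hc⟩
  have hfv : A.firstVisit C σ (Nat.find hex) :=
    ⟨Nat.find_spec hex, fun m hm => Nat.find_min hex hm⟩
  have h1 : A.util w C σ ≤ (pathWeight w (A.outList σ (Nat.find hex)) : ℕ∞) :=
    iInf₂_le (Nat.find hex) hfv
  refine h1.trans ?_
  rw [Nat.cast_le]
  calc pathWeight w (A.outList σ (Nat.find hex)) ≤ M * Nat.find hex :=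
        pathWeight_outList_le A hM σ _
    _ ≤ M * N := Nat.mul_le_mul_left M ((Nat.find_min' hex hc).trans hn)

end Arena

/-- Every winning strategy of Player 1 minimizing her regret is
bounded by `2·M·|S|`. -/
theorem regret_minimizing_strategy_bounded {S : Type} [Fintype S] (A : Arena S)
    (w : S → S → ℕ) (M : ℕ) (hM : ∀ s t, w s t ≤ M) (C : Set S)
    (σ1 : Strat S) (hval : A.Valid σ1) (hwin : A.Winning C true σ1)
    (hmin : A.regOf w C true σ1 = A.regMin w C true) :
    ∀ σ2 : Strat S, A.Valid σ2 →
      A.util w C (Arena.pairFor true σ1 σ2) ≤ (2 * M * Fintype.card S : ℕ) := by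
  classical
  intro σ2 hv2
  obtain ⟨σ', hv', hfast⟩ := Arena.exists_fast_winning A C hval hwin
  set B : ℕ∞ := ((M * Fintype.card S : ℕ) : ℕ∞) with hB
  have hBne : B ≠ ⊤ := by rw [hB]; exact ENat.coe_ne_top _
  have hutil' : ∀ σo : Strat S, A.Valid σo →
      A.util w C (Arena.pairFor true σ' σo) ≤ B := fun σo ho =>
    Arena.util_le_of_fast A hM C _ (hfast σo ho)
  have hbr : A.br w C true σ2 ≤ B :=
    le_trans (iInf₂_le σ' hv') (hutil' σ2 hv2)
  have hreg' : A.regOf w C true σ' ≤ B := by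
    refine iSup₂_le fun σo ho => ?_
    have hu := hutil' σo ho
    have hne : A.util w C (Arena.pairFor true σ' σo) ≠ ⊤ :=
      ne_top_of_le_ne_top hBne hu
    rw [regPairVal, if_neg hne]
    exact le_trans tsub_le_self hu
  have hreg1 : A.regOf w C true σ1 ≤ B := by
    rw [hmin]
    exact le_trans (iInf₂_le σ' hv') hreg'
  have key : regPairVal (A.util w C (Arena.pairFor true σ1 σ2)) (A.br w C true σ2)
      ≤ A.regOf w C true σ1 :=
    le_iSup₂ (f := fun σo (_ : A.Valid σo) =>
      regPairVal (A.util w C (Arena.pairFor true σ1 σo)) (A.br w C true σo)) σ2 hv2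
  have hu : A.util w C (Arena.pairFor true σ1 σ2) ≤
      regPairVal (A.util w C (Arena.pairFor true σ1 σ2)) (A.br w C true σ2)
        + A.br w C true σ2 := by
    by_cases h : A.util w C (Arena.pairFor true σ1 σ2) = ⊤
    · simp [regPairVal, h]
    · rw [regPairVal, if_neg h]
      exact le_tsub_add
  calc A.util w C (Arena.pairFor true σ1 σ2) ≤ _ + _ := hu
    _ ≤ B + B := add_le_add (key.trans hreg1) hbr
    _ = ((2 * M * Fintype.card S : ℕ) : ℕ∞) := by rw [hB]; push_cast; ring
end

section
/- Let G be a target-weighted arena and G' its graph of best alternatives with the bijections Φ_i between strategies of G and of G' induced by the bijection between paths of G and of G'. Then for every strategy λ1 of Player 1 in G, reg_1^G(λ1) = reg_1^{G'}(Φ_1(λ1)). -/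
open scoped ENat

namespace Arena

variable {S : Type}

/-- Best value achievable from `s` when both players cooperate, in a
target-weighted arena with target set `C` and target weights `μ`. -/
noncomputable def best (A : Arena S) (μ : S → ℕ) (C : Set S) (s : S) : ℕ∞ :=
  ⨅ (t : S) (_ : t ∈ C ∧ Relation.ReflTransGen A.edge s t), (μ t : ℕ∞)

/-- Best alternative for Player 1 of moving from `s` to `s'`. -/
noncomputable def ba (A : Arena S) (μ : S → ℕ) (C : Set S) (s s' : S) : ℕ∞ :=
  if A.owner s = true then
    ⨅ (s'' : S) (_ : A.edge s s'' ∧ s'' ≠ s'), A.best μ C s''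
  else ⊤

/-- Best alternative along a finite path (minimum of the best alternatives of
its edges, `⊤` for paths without edges). -/
noncomputable def baPath (A : Arena S) (μ : S → ℕ) (C : Set S) (l : List S) : ℕ∞ :=
  ((l.zip l.tail).map fun p => A.ba μ C p.1 p.2).foldr min ⊤

/-- The graph of best alternatives `G'` of a target-weighted arena. -/
noncomputable def baArena (A : Arena S) (μ : S → ℕ) (C : Set S) : Arena (S × ℕ∞) where
  owner := fun p => A.owner p.1
  init := (A.init, ⊤)
  edge := fun p q =>
    A.edge p.1 q.1 ∧
      q.2 = if A.owner p.1 = true then min p.2 (A.ba μ C p.1 q.1) else p.2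

/-- Utility in a target-weighted arena: the weight of the first target visited,
`⊤` if no target is visited. -/
noncomputable def utilT (A : Arena S) (μ : S → ℕ∞) (C : Set S)
    (σ : Bool → Strat S) : ℕ∞ :=
  ⨅ (n : ℕ) (_ : A.firstVisit C σ n), μ (A.cur σ n)

/-- Best response value of player `i` in a target-weighted arena. -/
noncomputable def brT (A : Arena S) (μ : S → ℕ∞) (C : Set S)
    (i : Bool) (σo : Strat S) : ℕ∞ :=
  ⨅ (σi : Strat S) (_ : A.Valid σi), A.utilT μ C (pairFor i σi σo)

/-- Regret of a strategy in a target-weighted arena. -/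
noncomputable def regOfT (A : Arena S) (μ : S → ℕ∞) (C : Set S)
    (i : Bool) (σi : Strat S) : ℕ∞ :=
  ⨆ (σo : Strat S) (_ : A.Valid σo),
    regPairVal (A.utilT μ C (pairFor i σi σo)) (A.brT μ C i σo)

/-- Minimal regret of player `i` in a target-weighted arena. -/
noncomputable def regMinT (A : Arena S) (μ : S → ℕ∞) (C : Set S) (i : Bool) : ℕ∞ :=
  ⨅ (σi : Strat S) (_ : A.Valid σi), A.regOfT μ C i σi

/-- The min-max value of player `i` in a target-weighted arena. -/
noncomputable def minmaxT (A : Arena S) (μ : S → ℕ∞) (C : Set S) (i : Bool) : ℕ∞ :=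
  ⨅ (σi : Strat S) (_ : A.Valid σi), ⨆ (σo : Strat S) (_ : A.Valid σo),
    A.utilT μ C (pairFor i σi σo)

/-- The strategy mapping `Φ₁` from strategies of `G` to strategies of the graph
of best alternatives `G'`: it simulates the given strategy on first projections
while tracking the minimal best alternative seen so far. -/
noncomputable def Phi1 (A : Arena S) (μ : S → ℕ) (C : Set S) (σ : Strat S) :
    Strat (S × ℕ∞) :=
  fun l =>
    let h := l.map Prod.fst
    let s := σ h
    (s, A.baPath μ C (h ++ [s]))

end Arena

theorem test2 : True := trivial

namespace Arena

variable {S : Type} (A : Arena S) (μ : S → ℕ) (C : Set S)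

/-! ### baPath lemmas -/

lemma baPath_nil : A.baPath μ C [] = ⊤ := rfl

lemma baPath_single (a : S) : A.baPath μ C [a] = ⊤ := rfl

lemma baPath_cons_cons (a b : S) (t : List S) :
    A.baPath μ C (a :: b :: t) = min (A.ba μ C a b) (A.baPath μ C (b :: t)) := rfl

lemma ba_of_owner_false {s : S} (h : A.owner s = false) (s' : S) :
    A.ba μ C s s' = ⊤ := by simp [ba, h]

lemma baPath_concat (d : S) : ∀ (l : List S), l ≠ [] → ∀ s : S,
    A.baPath μ C (l ++ [s]) = min (A.baPath μ C l) (A.ba μ C (l.getLastD d) s)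
  | [], h => absurd rfl h
  | [a], _ => fun s => by
      simp [baPath_cons_cons, baPath_single, baPath_nil, List.getLastD]
  | a :: b :: t, _ => fun s => by
      have ih := baPath_concat d (b :: t) (by simp) s
      rw [List.cons_append, List.getLastD_cons] at ih
      simp only [List.cons_append, baPath_cons_cons, ih, List.getLastD_cons]
      rw [min_assoc]

/-! ### lift -/

noncomputable def lift (l : List S) : List (S × ℕ∞) :=
  l.inits.tail.map fun p => (p.getLastD A.init, A.baPath μ C p)

@[simp] lemma lift_nil : A.lift μ C [] = [] := rfl

lemma lift_concat (l : List S) (s : S) :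
    A.lift μ C (l ++ [s]) = A.lift μ C l ++ [(s, A.baPath μ C (l ++ [s]))] := by
  have htail : ∀ {β : Type} (x : List β) (y : β), x ≠ [] → (x ++ [y]).tail = x.tail ++ [y] := by
    intro β x y hx
    cases x with
    | nil => exact absurd rfl hx
    | cons a t => rfl
  have hinits : l.inits ≠ [] := by cases l <;> simp [List.inits]
  unfold lift
  rw [List.inits_append]
  simp only [List.inits, List.map_cons, List.map_nil, List.map_append, List.nil_append]
  rw [show List.map (fun l_1 => l ++ l_1) ([[], [s]] : List (List S)).tail = [l ++ [s]] from rfl]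
  rw [htail _ _ hinits, List.map_append]
  simp [List.getLastD_concat]

lemma lift_map_fst (l : List S) : (A.lift μ C l).map Prod.fst = l := by
  induction l using List.reverseRecOn with
  | nil => rfl
  | append_singleton l s ih => rw [lift_concat]; simp [ih]

lemma lift_getLastD (l : List S) :
    (A.lift μ C l).getLastD (A.init, ⊤) = (l.getLastD A.init, A.baPath μ C l) := by
  induction l using List.reverseRecOn with
  | nil => simp [baPath_nil]
  | append_singleton l s _ => rw [lift_concat]; simp [List.getLastD_concat]

/-! ### relation between strategies -/

def Rel (σ : Strat S) (σ' : Strat (S × ℕ∞)) : Prop :=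
  ∀ l : List S, l ≠ [] →
    σ' (A.lift μ C l) = (σ l, A.baPath μ C (l ++ [σ l]))

noncomputable def genmap (σ : Strat S) : Strat (S × ℕ∞) :=
  fun l =>
    let p := l.getLastD (A.init, ⊤)
    let s := σ (l.map Prod.fst)
    (s, if A.owner p.1 = true then min p.2 (A.ba μ C p.1 s) else p.2)

lemma second_eq {l : List S} (hl : l ≠ []) (s : S) :
    (if A.owner (l.getLastD A.init) = true
      then min (A.baPath μ C l) (A.ba μ C (l.getLastD A.init) s)
      else A.baPath μ C l) = A.baPath μ C (l ++ [s]) := by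
  rw [baPath_concat A μ C A.init l hl s]
  by_cases h : A.owner (l.getLastD A.init) = true
  · rw [if_pos h]
  · rw [if_neg h, ba_of_owner_false A μ C (by simpa using h)]
    simp

lemma rel_genmap (σ : Strat S) : A.Rel μ C σ (A.genmap μ C σ) := by
  intro l hl
  simp only [genmap, lift_getLastD, lift_map_fst]
  exact Prod.ext rfl (second_eq A μ C hl (σ l))

lemma rel_phi1 (σ : Strat S) : A.Rel μ C σ (A.Phi1 μ C σ) := by
  intro l _
  simp only [Phi1, lift_map_fst]

lemma rel_proj {σ' : Strat (S × ℕ∞)} (h : (A.baArena μ C).Valid σ') :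
    A.Rel μ C (fun l => (σ' (A.lift μ C l)).1) σ' := by
  intro l hl
  have := h (A.lift μ C l)
  rw [show (A.baArena μ C).init = (A.init, ⊤) from rfl, lift_getLastD] at this
  refine Prod.ext rfl ?_
  have h2 := this.2
  simp only at h2
  rw [h2]
  exact second_eq A μ C hl _

lemma getLastD_map_fst (l : List (S × ℕ∞)) :
    (l.map Prod.fst).getLastD A.init = (l.getLastD (A.init, ⊤)).1 := by
  induction l using List.reverseRecOn with
  | nil => rfl
  | append_singleton l p _ => simp [List.getLastD_concat]

lemma valid_genmap {σ : Strat S} (h : A.Valid σ) :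
    (A.baArena μ C).Valid (A.genmap μ C σ) := by
  intro l
  refine ⟨?_, rfl⟩
  have := h (l.map Prod.fst)
  rwa [getLastD_map_fst] at this

lemma valid_proj {σ' : Strat (S × ℕ∞)} (h : (A.baArena μ C).Valid σ') :
    A.Valid (fun l => (σ' (A.lift μ C l)).1) := by
  intro l
  have := (h (A.lift μ C l)).1
  rwa [show (A.baArena μ C).init = (A.init, ⊤) from rfl, lift_getLastD] at this

/-! ### outcome correspondence -/

lemma outList_ne_nil (σ : Bool → Strat S) (n : ℕ) : A.outList σ n ≠ [] := by
  cases n <;> simp [outList]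

lemma out_eq (σ : Bool → Strat S) (σ' : Bool → Strat (S × ℕ∞))
    (h : ∀ b, A.Rel μ C (σ b) (σ' b)) (n : ℕ) :
    (A.baArena μ C).outList σ' n = A.lift μ C (A.outList σ n) := by
  induction n with
  | zero =>
      show [((A.init : S), (⊤ : ℕ∞))] = A.lift μ C [A.init]
      rw [show ([A.init] : List S) = [] ++ [A.init] from rfl, lift_concat]
      simp [baPath_single]
  | succ n ih =>
      show (A.baArena μ C).outList σ' n ++ _ = _
      rw [ih]
      have hne := A.outList_ne_nil σ n
      set L := A.outList σ n with hL
      have howner : (A.baArena μ C).owner ((A.lift μ C L).getLastD (A.baArena μ C).init)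
          = A.owner (L.getLastD A.init) := by
        rw [show (A.baArena μ C).init = (A.init, ⊤) from rfl, lift_getLastD]; rfl
      rw [show (A.baArena μ C).init = (A.init, ⊤) from rfl] at howner ⊢
      rw [howner, h _ L hne, show A.outList σ (n+1)
        = L ++ [σ (A.owner (L.getLastD A.init)) L] from rfl, lift_concat]

lemma cur_eq (σ : Bool → Strat S) (σ' : Bool → Strat (S × ℕ∞))
    (h : ∀ b, A.Rel μ C (σ b) (σ' b)) (n : ℕ) :
    (A.baArena μ C).cur σ' n = (A.cur σ n, A.baPath μ C (A.outList σ n)) := by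
  show ((A.baArena μ C).outList σ' n).getLastD (A.init, ⊤) = _
  rw [out_eq A μ C σ σ' h n, lift_getLastD]; rfl

lemma utilT_eq (σ : Bool → Strat S) (σ' : Bool → Strat (S × ℕ∞))
    (h : ∀ b, A.Rel μ C (σ b) (σ' b)) :
    (A.baArena μ C).utilT (fun p => (μ p.1 : ℕ∞)) {p | p.1 ∈ C} σ'
      = A.utilT (fun s => (μ s : ℕ∞)) C σ := by
  unfold utilT
  refine iInf_congr fun n => ?_
  have hfv : (A.baArena μ C).firstVisit {p | p.1 ∈ C} σ' n ↔ A.firstVisit C σ n := by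
    unfold firstVisit
    simp only [cur_eq A μ C σ σ' h, Set.mem_setOf_eq]
  have hval : ((μ ((A.baArena μ C).cur σ' n).1 : ℕ∞)) = (μ (A.cur σ n) : ℕ∞) := by
    rw [cur_eq A μ C σ σ' h]
  rw [show ((A.baArena μ C).firstVisit {p | p.1 ∈ C} σ' n) = (A.firstVisit C σ n)
    from propext hfv]
  exact iInf_congr fun _ => hval

lemma rel_pair {σ1 σo : Strat S} {σ1' σo' : Strat (S × ℕ∞)}
    (h1 : A.Rel μ C σ1 σ1') (ho : A.Rel μ C σo σo') (b : Bool) :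
    A.Rel μ C (pairFor true σ1 σo b) (pairFor true σ1' σo' b) := by
  cases b <;> simp [pairFor, h1, ho]

lemma brT_eq {σo : Strat S} {σo' : Strat (S × ℕ∞)} (ho : A.Rel μ C σo σo') :
    (A.baArena μ C).brT (fun p => (μ p.1 : ℕ∞)) {p | p.1 ∈ C} true σo'
      = A.brT (fun s => (μ s : ℕ∞)) C true σo := by
  unfold brT
  apply le_antisymm
  · refine le_iInf₂ fun τ hτ => ?_
    refine iInf₂_le_of_le (A.genmap μ C τ) (A.valid_genmap μ C hτ) ?_
    exact le_of_eq (utilT_eq A μ C _ _ (rel_pair A μ C (A.rel_genmap μ C τ) ho))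
  · refine le_iInf₂ fun τ' hτ' => ?_
    refine iInf₂_le_of_le (fun l => (τ' (A.lift μ C l)).1) (A.valid_proj μ C hτ') ?_
    exact le_of_eq (utilT_eq A μ C _ _ (rel_pair A μ C (A.rel_proj μ C hτ') ho)).symm

end Arena

/-- The map `Φ₁` from strategies of a target-weighted arena `G`
to strategies of its graph of best alternatives `G'` preserves the regret of
Player 1: `reg₁^G(λ₁) = reg₁^{G'}(Φ₁(λ₁))`. -/
theorem phi1_preserves_regret {S : Type} [Fintype S] (A : Arena S)
    (μ : S → ℕ) (C : Set S) (σ1 : Strat S) (hval : A.Valid σ1) :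
    A.regOfT (fun s => (μ s : ℕ∞)) C true σ1 =
      (A.baArena μ C).regOfT (fun p => (μ p.1 : ℕ∞)) {p | p.1 ∈ C} true
        (A.Phi1 μ C σ1) := by
  unfold Arena.regOfT
  apply le_antisymm
  · refine iSup₂_le fun σo hσo => ?_
    have key : regPairVal (A.utilT (fun s => (μ s : ℕ∞)) C (Arena.pairFor true σ1 σo))
        (A.brT (fun s => (μ s : ℕ∞)) C true σo)
      = regPairVal
        ((A.baArena μ C).utilT (fun p => (μ p.1 : ℕ∞)) {p | p.1 ∈ C}
          (Arena.pairFor true (A.Phi1 μ C σ1) (A.genmap μ C σo)))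
        ((A.baArena μ C).brT (fun p => (μ p.1 : ℕ∞)) {p | p.1 ∈ C} true
          (A.genmap μ C σo)) := by
      rw [A.utilT_eq μ C _ _ (A.rel_pair μ C (A.rel_phi1 μ C σ1) (A.rel_genmap μ C σo)),
        A.brT_eq μ C (A.rel_genmap μ C σo)]
    rw [key]
    exact le_iSup_of_le (A.genmap μ C σo) (le_iSup_of_le (A.valid_genmap μ C hσo) le_rfl)
  · refine iSup₂_le fun σo' hσo' => ?_
    have key : regPairVal
        ((A.baArena μ C).utilT (fun p => (μ p.1 : ℕ∞)) {p | p.1 ∈ C}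
          (Arena.pairFor true (A.Phi1 μ C σ1) σo'))
        ((A.baArena μ C).brT (fun p => (μ p.1 : ℕ∞)) {p | p.1 ∈ C} true σo')
      = regPairVal
          (A.utilT (fun s => (μ s : ℕ∞)) C
            (Arena.pairFor true σ1 (fun l => (σo' (A.lift μ C l)).1)))
          (A.brT (fun s => (μ s : ℕ∞)) C true (fun l => (σo' (A.lift μ C l)).1)) := by
      rw [A.utilT_eq μ C _ _ (A.rel_pair μ C (A.rel_phi1 μ C σ1) (A.rel_proj μ C hσo')),
        A.brT_eq μ C (A.rel_proj μ C hσo')]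
    rw [key]
    exact le_iSup_of_le (fun l => (σo' (A.lift μ C l)).1)
      (le_iSup_of_le (A.valid_proj μ C hσo') le_rfl)
end
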